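/- arXiv:1603.04892 — 2 statements merged into one kernel-verified Lean document; each statement's English description precedes it below -/
import Mathlib

section
/- There is an absolute constant C > 0 such that for every n ≥ 1 and every access sequence S = (s_1,…,s_m) ∈ {1,…,n}^m, the fixed finger bound is dominated by the weighted static finger bound: FF(S) ≤ C·(WSF(S) + m). -/
/-- Binary trees with natural-number keys. -/
inductive BTree : Type where
  | leaf : BTree
  | node : BTree → ℕ → BTree → BTree

namespace BTree

/-- The set of keys appearing in the tree. -/
def keys : BTree → Finset ℕ
  | leaf => ∅
  | node l x r => keys l ∪ {x} ∪ keys r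

/-- Binary search tree property: left keys smaller, right keys larger. -/
def IsSearchTree : BTree → Prop
  | leaf => True
  | node l x r => (∀ y ∈ keys l, y < x) ∧ (∀ y ∈ keys r, x < y) ∧
      IsSearchTree l ∧ IsSearchTree r

/-- Depth of the key `y` (number of edges from the root), via the search path. -/
def depth : BTree → ℕ → ℕ
  | leaf, _ => 0
  | node l x r, y =>
      if y = x then 0
      else if y < x then depth l y + 1
      else depth r y + 1

/-- Number of edges on the path between the keys `a` and `b` (for a search tree). -/
def dist : BTree → ℕ → ℕ → ℕ
  | leaf, _, _ => 0
  | node l x r, a, b =>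
      if a < x ∧ b < x then dist l a b
      else if x < a ∧ x < b then dist r a b
      else depth (node l x r) a + depth (node l x r) b

/-- `T` is a binary search tree on the key set `{1, …, n}`. -/
def IsBSTOn (T : BTree) (n : ℕ) : Prop :=
  T.IsSearchTree ∧ T.keys = Finset.Icc 1 n

end BTree

/-- The weighted static finger bound `WSF(S)`: infimum over positive weight functions `w`
and finger keys `f ∈ {1,…,n}` of `∑_j log₂( w[f:s_j] / min(w f, w s_j) )`, where
`w[i:j]` is the total weight of the keys between `i` and `j`. -/
noncomputable def WSF (n : ℕ) {m : ℕ} (S : Fin m → ℕ) : ℝ :=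
  sInf {x : ℝ | ∃ w : ℕ → ℝ, ∃ f ∈ Finset.Icc 1 n,
    (∀ i ∈ Finset.Icc 1 n, 0 < w i) ∧
    x = ∑ j, Real.logb 2
      ((∑ i ∈ Finset.Icc (min f (S j)) (max f (S j)), w i) / min (w f) (w (S j)))}

/-- The fixed finger bound `FF(S)`: minimum over BSTs `T` on `{1,…,n}` and finger keys
`f ∈ {1,…,n}` of `∑_j d_T(f, s_j)`. -/
noncomputable def FF (n : ℕ) {m : ℕ} (S : Fin m → ℕ) : ℝ :=
  sInf {x : ℝ | ∃ T : BTree, ∃ f ∈ Finset.Icc 1 n, T.IsBSTOn n ∧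
    x = ∑ j, (BTree.dist T f (S j) : ℝ)}

/-! ### Auxiliary lemmas -/

lemma dist_le_depth_aux (T : BTree) (a b : ℕ) :
    T.dist a b ≤ T.depth a + T.depth b := by
  induction T with
  | leaf => simp [BTree.dist, BTree.depth]
  | node l x r ihl ihr =>
    rw [BTree.dist]
    split
    · rename_i h
      rw [BTree.depth, BTree.depth, if_neg (by omega), if_pos h.1, if_neg (by omega), if_pos h.2]
      omega
    · split
      · rename_i h
        rw [BTree.depth, BTree.depth, if_neg (by omega), if_neg (by omega),
          if_neg (by omega), if_neg (by omega)]
        omega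
      · omega

/-- minimal `k ∈ [a,b]` whose prefix weight exceeds half the total weight. -/
noncomputable def pick (v : ℕ → ℝ) (a b : ℕ) : ℕ :=
  sInf {k : ℕ | a ≤ k ∧ k ≤ b ∧ (∑ i ∈ Finset.Icc a b, v i) < 2 * ∑ i ∈ Finset.Icc a k, v i}

lemma pick_set_nonempty {v : ℕ → ℝ} {a b : ℕ} (hab : a ≤ b)
    (hv : ∀ i ∈ Finset.Icc a b, 0 < v i) :
    {k : ℕ | a ≤ k ∧ k ≤ b ∧
      (∑ i ∈ Finset.Icc a b, v i) < 2 * ∑ i ∈ Finset.Icc a k, v i}.Nonempty := by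
  refine ⟨b, hab, le_refl b, ?_⟩
  have hpos : 0 < ∑ i ∈ Finset.Icc a b, v i :=
    Finset.sum_pos hv ⟨a, Finset.mem_Icc.mpr ⟨le_refl a, hab⟩⟩
  linarith

lemma pick_mem {v : ℕ → ℝ} {a b : ℕ} (hab : a ≤ b) (hv : ∀ i ∈ Finset.Icc a b, 0 < v i) :
    a ≤ pick v a b ∧ pick v a b ≤ b ∧
      (∑ i ∈ Finset.Icc a b, v i) < 2 * ∑ i ∈ Finset.Icc a (pick v a b), v i :=
  Nat.sInf_mem (pick_set_nonempty hab hv)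

lemma pick_min {v : ℕ → ℝ} {a b : ℕ} {j : ℕ} (hja : a ≤ j) (hjb : j ≤ b)
    (hj : j < pick v a b) :
    2 * ∑ i ∈ Finset.Icc a j, v i ≤ ∑ i ∈ Finset.Icc a b, v i := by
  have := Nat.notMem_of_lt_sInf hj
  simp only [Set.mem_setOf_eq, not_and, not_lt] at this
  exact this hja hjb

/-- Weight-balanced biased search tree on the interval `[a, b]`. -/
noncomputable def build (v : ℕ → ℝ) (a b : ℕ) : BTree :=
  if hab : a ≤ b then
    BTree.node
      (if a < min (max (pick v a b) a) b then build v a (min (max (pick v a b) a) b - 1)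
       else BTree.leaf)
      (min (max (pick v a b) a) b)
      (if min (max (pick v a b) a) b < b then build v (min (max (pick v a b) a) b + 1) b
       else BTree.leaf)
  else BTree.leaf
termination_by b + 1 - a
decreasing_by
  · omega
  · omega

lemma build_spec (v : ℕ → ℝ) : ∀ N a b, b + 1 - a ≤ N → 1 ≤ a → a ≤ b →
    (∀ i ∈ Finset.Icc a b, 0 < v i) →
    (build v a b).IsSearchTree ∧ (build v a b).keys = Finset.Icc a b ∧
    ∀ i ∈ Finset.Icc a b, (2:ℝ) ^ ((build v a b).depth i) * v i ≤ ∑ j ∈ Finset.Icc a b, v j := by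
  intro N
  induction N with
  | zero => intro a b hN h1 hab _; omega
  | succ N ih =>
    intro a b hN h1 hab hv
    obtain ⟨hak, hkb, hhalf⟩ := pick_mem hab hv
    set K := pick v a b with hK
    have hclamp : min (max (pick v a b) a) b = K := by omega
    rw [build, dif_pos hab, hclamp]
    have hvL : ∀ i ∈ Finset.Icc a (K - 1), 0 < v i := fun i hi => by
      refine hv i (Finset.mem_Icc.mpr ?_); have := Finset.mem_Icc.mp hi; omega
    have hvR : ∀ i ∈ Finset.Icc (K + 1) b, 0 < v i := fun i hi => by
      refine hv i (Finset.mem_Icc.mpr ?_); have := Finset.mem_Icc.mp hi; omega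
    have hsplit1 : ∑ i ∈ Finset.Icc a K, v i = (∑ i ∈ Finset.Icc a (K - 1), v i) + v K := by
      have : K = (K - 1) + 1 := by omega
      rw [this] at hak ⊢
      exact Finset.sum_Icc_succ_top hak v
    have hsplit2 : ∑ i ∈ Finset.Icc a b, v i
        = (∑ i ∈ Finset.Icc a K, v i) + ∑ i ∈ Finset.Icc (K + 1) b, v i := by
      rw [← Finset.sum_union]
      · congr 1
        ext x
        simp only [Finset.mem_union, Finset.mem_Icc]
        omega
      · rw [Finset.disjoint_left]
        intro x hx hx'
        simp only [Finset.mem_Icc] at hx hx'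
        omega
    by_cases hca : a < K
    · have hL := ih a (K - 1) (by omega) h1 (by omega) hvL
      rw [if_pos hca]
      by_cases hcb : K < b
      · have hR := ih (K + 1) b (by omega) (by omega) (by omega) hvR
        rw [if_pos hcb]
        obtain ⟨hLs, hLk, hLd⟩ := hL
        obtain ⟨hRs, hRk, hRd⟩ := hR
        refine ⟨⟨?_, ?_, hLs, hRs⟩, ?_, ?_⟩
        · intro y hy; rw [hLk, Finset.mem_Icc] at hy; omega
        · intro y hy; rw [hRk, Finset.mem_Icc] at hy; omega
        · simp only [BTree.keys]; rw [hLk, hRk]; ext x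
          simp only [Finset.mem_union, Finset.mem_Icc, Finset.mem_singleton]; omega
        · intro i hi
          have hiab := Finset.mem_Icc.mp hi
          rw [BTree.depth]
          rcases lt_trichotomy i K with hik | hik | hik
          · rw [if_neg (by omega), if_pos hik]
            have := hLd i (Finset.mem_Icc.mpr (by omega))
            have hmin := pick_min (v := v) (a := a) (b := b) (j := K - 1)
              (by omega) (by omega) (by omega)
            have hp : (0:ℝ) < 2 ^ (BTree.depth (build v a (K - 1)) i) := by positivity
            rw [pow_succ]
            nlinarith
          · rw [if_pos hik]
            simp only [pow_zero, one_mul, hik]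
            exact Finset.single_le_sum (fun j hj => (hv j hj).le) (Finset.mem_Icc.mpr (by omega))
          · rw [if_neg (by omega), if_neg (by omega)]
            have := hRd i (Finset.mem_Icc.mpr (by omega))
            have hp : (0:ℝ) < 2 ^ (BTree.depth (build v (K + 1) b) i) := by positivity
            rw [pow_succ]
            nlinarith
      · have hKb : K = b := by omega
        rw [if_neg hcb]
        obtain ⟨hLs, hLk, hLd⟩ := hL
        refine ⟨⟨?_, ?_, hLs, trivial⟩, ?_, ?_⟩
        · intro y hy; rw [hLk, Finset.mem_Icc] at hy; omega
        · intro y hy; simp [BTree.keys] at hy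
        · simp only [BTree.keys]; rw [hLk]; ext x
          simp only [Finset.mem_union, Finset.mem_Icc, Finset.mem_singleton,
            Finset.notMem_empty, or_false]
          omega
        · intro i hi
          have hiab := Finset.mem_Icc.mp hi
          rw [BTree.depth]
          rcases lt_trichotomy i K with hik | hik | hik
          · rw [if_neg (by omega), if_pos hik]
            have := hLd i (Finset.mem_Icc.mpr (by omega))
            have hmin := pick_min (v := v) (a := a) (b := b) (j := K - 1)
              (by omega) (by omega) (by omega)
            have hp : (0:ℝ) < 2 ^ (BTree.depth (build v a (K - 1)) i) := by positivity
            rw [pow_succ]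
            nlinarith
          · rw [if_pos hik]
            simp only [pow_zero, one_mul, hik]
            exact Finset.single_le_sum (fun j hj => (hv j hj).le) (Finset.mem_Icc.mpr (by omega))
          · omega
    · have hKa : K = a := by omega
      rw [if_neg hca]
      by_cases hcb : K < b
      · have hR := ih (K + 1) b (by omega) (by omega) (by omega) hvR
        rw [if_pos hcb]
        obtain ⟨hRs, hRk, hRd⟩ := hR
        refine ⟨⟨?_, ?_, trivial, hRs⟩, ?_, ?_⟩
        · intro y hy; simp [BTree.keys] at hy
        · intro y hy; rw [hRk, Finset.mem_Icc] at hy; omega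
        · simp only [BTree.keys]; rw [hRk]; ext x
          simp only [Finset.mem_union, Finset.mem_Icc, Finset.mem_singleton,
            Finset.notMem_empty, false_or]
          omega
        · intro i hi
          have hiab := Finset.mem_Icc.mp hi
          rw [BTree.depth]
          rcases lt_trichotomy i K with hik | hik | hik
          · omega
          · rw [if_pos hik]
            simp only [pow_zero, one_mul, hik]
            exact Finset.single_le_sum (fun j hj => (hv j hj).le) (Finset.mem_Icc.mpr (by omega))
          · rw [if_neg (by omega), if_neg (by omega)]
            have := hRd i (Finset.mem_Icc.mpr (by omega))
            have hp : (0:ℝ) < 2 ^ (BTree.depth (build v (K + 1) b) i) := by positivity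
            rw [pow_succ]
            nlinarith
      · have hKa' : a = b := by omega
        rw [if_neg hcb]
        refine ⟨⟨?_, ?_, trivial, trivial⟩, ?_, ?_⟩
        · intro y hy; simp [BTree.keys] at hy
        · intro y hy; simp [BTree.keys] at hy
        · simp only [BTree.keys]; ext x
          simp only [Finset.mem_union, Finset.mem_Icc, Finset.mem_singleton,
            Finset.notMem_empty, false_or, or_false]
          omega
        · intro i hi
          have hiab := Finset.mem_Icc.mp hi
          have hik : i = K := by omega
          rw [BTree.depth, if_pos hik]
          simp only [pow_zero, one_mul, hik]
          exact Finset.single_le_sum (fun j hj => (hv j hj).le) (Finset.mem_Icc.mpr (by omega))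

lemma tele_right (w : ℕ → ℝ) (f n : ℕ) (h1 : 1 ≤ f)
    (hv : ∀ i ∈ Finset.Icc 1 n, 0 < w i) :
    ∀ d, f + d ≤ n →
      ∑ i ∈ Finset.Icc (f + 1) (f + d), w i / (∑ j ∈ Finset.Icc f i, w j) ^ 2
        ≤ 1 / w f - 1 / ∑ j ∈ Finset.Icc f (f + d), w j := by
  intro d
  induction d with
  | zero =>
    intro _
    simp
  | succ d ih =>
    intro hd
    have hQpos : ∀ c e : ℕ, f ≤ c → c ≤ e → e ≤ n → 0 < ∑ j ∈ Finset.Icc c e, w j := by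
      intro c e hc he hen
      refine Finset.sum_pos (fun j hj => ?_) ⟨c, Finset.mem_Icc.mpr ⟨le_refl c, he⟩⟩
      have := Finset.mem_Icc.mp hj
      exact hv j (Finset.mem_Icc.mpr ⟨by omega, by omega⟩)
    have ih' := ih (by omega)
    have hb : f + (d + 1) = (f + d) + 1 := by omega
    rw [hb, Finset.sum_Icc_succ_top (by omega : f + 1 ≤ f + d + 1),
      Finset.sum_Icc_succ_top (by omega : f ≤ f + d + 1)]
    set Q := ∑ j ∈ Finset.Icc f (f + d), w j with hQ
    have hQ0 : 0 < Q := hQpos f (f + d) (by omega) (by omega) (by omega)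
    have hw0 : 0 < w (f + d + 1) := hv _ (Finset.mem_Icc.mpr ⟨by omega, by omega⟩)
    have hQ'0 : 0 < Q + w (f + d + 1) := by linarith
    have hterm : w (f + d + 1) / (Q + w (f + d + 1)) ^ 2
        ≤ 1 / Q - 1 / (Q + w (f + d + 1)) := by
      rw [div_sub_div _ _ (ne_of_gt hQ0) (ne_of_gt hQ'0),
        div_le_div_iff₀ (by positivity) (by positivity)]
      nlinarith [mul_pos (mul_pos hw0 hw0) hQ0, pow_pos hw0 3]
    calc (∑ i ∈ Finset.Icc (f + 1) (f + d), w i / (∑ j ∈ Finset.Icc f i, w j) ^ 2)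
          + w (f + d + 1) / (Q + w (f + d + 1)) ^ 2
        ≤ (1 / w f - 1 / Q) + (1 / Q - 1 / (Q + w (f + d + 1))) := by
          exact add_le_add ih' hterm
      _ = 1 / w f - 1 / (Q + w (f + d + 1)) := by ring

lemma tele_left (w : ℕ → ℝ) (f n : ℕ) (hfn : f ≤ n)
    (hv : ∀ i ∈ Finset.Icc 1 n, 0 < w i) :
    ∀ d, d < f →
      ∑ i ∈ Finset.Icc (f - d) (f - 1), w i / (∑ j ∈ Finset.Icc i f, w j) ^ 2
        ≤ 1 / w f - 1 / ∑ j ∈ Finset.Icc (f - d) f, w j := by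
  intro d
  induction d with
  | zero =>
    intro h1
    rw [Nat.sub_zero, Finset.Icc_eq_empty (by omega : ¬ f ≤ f - 1), Finset.sum_empty,
      Finset.Icc_self, Finset.sum_singleton]
    simp
  | succ d ih =>
    intro hd
    have hQpos : ∀ c e : ℕ, 1 ≤ c → c ≤ e → e ≤ n → 0 < ∑ j ∈ Finset.Icc c e, w j := by
      intro c e hc he hen
      refine Finset.sum_pos (fun j hj => ?_) ⟨c, Finset.mem_Icc.mpr ⟨le_refl c, he⟩⟩
      have := Finset.mem_Icc.mp hj
      exact hv j (Finset.mem_Icc.mpr ⟨by omega, by omega⟩)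
    have ih' := ih (by omega)
    have hc1 : f - (d + 1) = (f - d - 1) := by omega
    have hc2 : (f - d - 1) + 1 = f - d := by omega
    have hins1 : Finset.Icc (f - (d+1)) (f - 1)
        = insert (f - d - 1) (Finset.Icc (f - d) (f - 1)) := by
      ext x; simp only [Finset.mem_Icc, Finset.mem_insert]; omega
    have hins2 : Finset.Icc (f - (d+1)) f = insert (f - d - 1) (Finset.Icc (f - d) f) := by
      ext x; simp only [Finset.mem_Icc, Finset.mem_insert]; omega
    rw [hins1, hins2, Finset.sum_insert (by rw [Finset.mem_Icc]; omega),
      Finset.sum_insert (by rw [Finset.mem_Icc]; omega)]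
    set Q := ∑ j ∈ Finset.Icc (f - d) f, w j with hQ
    have hQ0 : 0 < Q := hQpos (f - d) f (by omega) (by omega) (by omega)
    have hw0 : 0 < w (f - d - 1) := hv _ (Finset.mem_Icc.mpr ⟨by omega, by omega⟩)
    have hsum : ∑ j ∈ Finset.Icc (f - d - 1) f, w j = w (f - d - 1) + Q := by
      have h : Finset.Icc (f - d - 1) f = insert (f - d - 1) (Finset.Icc (f - d) f) := by
        ext x; simp only [Finset.mem_Icc, Finset.mem_insert]; omega
      rw [h, Finset.sum_insert (by rw [Finset.mem_Icc]; omega)]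
    rw [hsum]
    have hterm : w (f - d - 1) / (w (f - d - 1) + Q) ^ 2
        ≤ 1 / Q - 1 / (w (f - d - 1) + Q) := by
      rw [div_sub_div _ _ (ne_of_gt hQ0) (by positivity),
        div_le_div_iff₀ (by positivity) (by positivity)]
      nlinarith [mul_pos (mul_pos hw0 hw0) hQ0, pow_pos hw0 3]
    calc w (f - d - 1) / (w (f - d - 1) + Q) ^ 2
          + ∑ i ∈ Finset.Icc (f - d) (f - 1), w i / (∑ j ∈ Finset.Icc i f, w j) ^ 2
        ≤ (1 / Q - 1 / (w (f - d - 1) + Q)) + (1 / w f - 1 / Q) := add_le_add hterm ih'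
      _ = 1 / w f - 1 / (w (f - d - 1) + Q) := by ring

lemma total_bound (w : ℕ → ℝ) (f n : ℕ) (hf1 : 1 ≤ f) (hfn : f ≤ n)
    (hv : ∀ i ∈ Finset.Icc 1 n, 0 < w i) :
    ∑ i ∈ Finset.Icc 1 n, w i / (∑ j ∈ Finset.Icc (min f i) (max f i), w j) ^ 2
      ≤ 3 / w f := by
  have hQpos : ∀ c e : ℕ, 1 ≤ c → c ≤ e → e ≤ n → 0 < ∑ j ∈ Finset.Icc c e, w j := by
    intro c e hc he hen
    refine Finset.sum_pos (fun j hj => ?_) ⟨c, Finset.mem_Icc.mpr ⟨le_refl c, he⟩⟩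
    have := Finset.mem_Icc.mp hj
    exact hv j (Finset.mem_Icc.mpr ⟨by omega, by omega⟩)
  have hwf : 0 < w f := hv f (Finset.mem_Icc.mpr ⟨hf1, hfn⟩)
  have e1 : Finset.Icc 1 n = Finset.Icc 1 (f - 1) ∪ Finset.Icc f n := by
    ext x; simp only [Finset.mem_union, Finset.mem_Icc]; omega
  have hdisj : Disjoint (Finset.Icc 1 (f - 1)) (Finset.Icc f n) := by
    rw [Finset.disjoint_left]; intro x hx hx'
    simp only [Finset.mem_Icc] at hx hx'; omega
  rw [e1, Finset.sum_union hdisj]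
  have e2 : Finset.Icc f n = insert f (Finset.Icc (f + 1) n) :=
    (Finset.insert_Icc_add_one_left_eq_Icc hfn).symm
  rw [e2, Finset.sum_insert (by rw [Finset.mem_Icc]; omega)]
  have hL : ∑ i ∈ Finset.Icc 1 (f - 1), w i / (∑ j ∈ Finset.Icc (min f i) (max f i), w j) ^ 2
      ≤ 1 / w f := by
    have := tele_left w f n hfn hv (f - 1) (by omega)
    have hrw : ∑ i ∈ Finset.Icc (f - (f - 1)) (f - 1), w i / (∑ j ∈ Finset.Icc i f, w j) ^ 2
        = ∑ i ∈ Finset.Icc 1 (f - 1), w i / (∑ j ∈ Finset.Icc (min f i) (max f i), w j) ^ 2 := by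
      rw [show f - (f - 1) = 1 by omega]
      refine Finset.sum_congr rfl (fun i hi => ?_)
      have hi' := Finset.mem_Icc.mp hi
      rw [min_eq_right (by omega : i ≤ f), max_eq_left (by omega : i ≤ f)]
    rw [hrw] at this
    have hpos : 0 < ∑ j ∈ Finset.Icc (f - (f - 1)) f, w j := hQpos _ f (by omega) (by omega) hfn
    have : (0:ℝ) < 1 / ∑ j ∈ Finset.Icc (f - (f - 1)) f, w j := by positivity
    linarith
  have hM : w f / (∑ j ∈ Finset.Icc (min f f) (max f f), w j) ^ 2 = 1 / w f := by
    rw [min_self, max_self, Finset.Icc_self, Finset.sum_singleton, sq,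
      div_mul_eq_div_div, div_self (ne_of_gt hwf)]
  have hR : ∑ i ∈ Finset.Icc (f + 1) n, w i / (∑ j ∈ Finset.Icc (min f i) (max f i), w j) ^ 2
      ≤ 1 / w f := by
    have := tele_right w f n hf1 hv (n - f) (by omega)
    rw [show f + (n - f) = n by omega] at this
    have hrw : ∑ i ∈ Finset.Icc (f + 1) n, w i / (∑ j ∈ Finset.Icc f i, w j) ^ 2
        = ∑ i ∈ Finset.Icc (f + 1) n, w i / (∑ j ∈ Finset.Icc (min f i) (max f i), w j) ^ 2 := by
      refine Finset.sum_congr rfl (fun i hi => ?_)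
      have hi' := Finset.mem_Icc.mp hi
      rw [min_eq_left (by omega : f ≤ i), max_eq_right (by omega : f ≤ i)]
    rw [hrw] at this
    have hpos : 0 < ∑ j ∈ Finset.Icc f n, w j := hQpos f n hf1 hfn (le_refl n)
    have : (0:ℝ) < 1 / ∑ j ∈ Finset.Icc f n, w j := by positivity
    linarith
  rw [hM]
  have h3 : (3:ℝ) / w f = 1 / w f + (1 / w f + 1 / w f) := by ring
  rw [h3]
  exact add_le_add hL (add_le_add le_rfl hR)

lemma nat_le_logb {d : ℕ} {x : ℝ} (h : (2:ℝ) ^ d ≤ x) : (d:ℝ) ≤ Real.logb 2 x := by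
  have hx : (0:ℝ) < 2 ^ d := by positivity
  have h1 : Real.logb 2 ((2:ℝ) ^ d) = d := by
    rw [Real.logb_pow, Real.logb_self_eq_one (by norm_num)]; simp
  calc (d:ℝ) = Real.logb 2 ((2:ℝ) ^ d) := h1.symm
    _ ≤ Real.logb 2 x := Real.logb_le_logb_of_le (by norm_num) hx h

/-- There is an absolute constant `C > 0` such that for every `n ≥ 1` and every access
sequence `S ∈ {1,…,n}^m`, the fixed finger bound is dominated by the weighted static
finger bound: `FF(S) ≤ C·(WSF(S) + m)`. -/
theorem ff_le_wsf : ∃ C : ℝ, 0 < C ∧ ∀ (n m : ℕ) (S : Fin m → ℕ),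
    1 ≤ n → (∀ j, S j ∈ Finset.Icc 1 n) →
    FF n S ≤ C * (WSF n S + m) := by
  refine ⟨4, by norm_num, ?_⟩
  intro n m S hn hS
  -- key step: for any admissible pair (w, f), FF is at most 4·(cost + m)
  have key : ∀ x ∈ {x : ℝ | ∃ w : ℕ → ℝ, ∃ f ∈ Finset.Icc 1 n,
      (∀ i ∈ Finset.Icc 1 n, 0 < w i) ∧
      x = ∑ j, Real.logb 2
        ((∑ i ∈ Finset.Icc (min f (S j)) (max f (S j)), w i) / min (w f) (w (S j)))},
      FF n S ≤ 4 * (x + m) := by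
    rintro x ⟨w, f, hf, hw, rfl⟩
    obtain ⟨hf1, hfn⟩ := Finset.mem_Icc.mp hf
    set q : ℕ → ℝ := fun i => ∑ j ∈ Finset.Icc (min f i) (max f i), w j with hq_def
    set v : ℕ → ℝ := fun i => w i / (q i) ^ 2 with hv_def
    have hwf : 0 < w f := hw f hf
    have hqpos : ∀ i ∈ Finset.Icc 1 n, 0 < q i := by
      intro i hi
      have hi' := Finset.mem_Icc.mp hi
      refine Finset.sum_pos (fun j hj => ?_) ⟨i, Finset.mem_Icc.mpr ⟨by omega, by omega⟩⟩
      have := Finset.mem_Icc.mp hj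
      exact hw j (Finset.mem_Icc.mpr ⟨by omega, by omega⟩)
    have hvpos : ∀ i ∈ Finset.Icc 1 n, 0 < v i := by
      intro i hi
      have := hqpos i hi
      have := hw i hi
      simp only [hv_def]
      positivity
    obtain ⟨hTs, hTk, hTd⟩ := build_spec v (n + 1) 1 n (by omega) le_rfl hn hvpos
    set T := build v 1 n with hT_def
    set V := ∑ j ∈ Finset.Icc 1 n, v j with hV_def
    have hV3 : V ≤ 3 / w f := total_bound w f n hf1 hfn hw
    have hqf : q f = w f := by
      simp only [hq_def, min_self, max_self, Finset.Icc_self, Finset.sum_singleton]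
    -- depth of the finger
    have hdf : (T.depth f : ℝ) ≤ 2 := by
      have h1 := hTd f hf
      have h2 : (2:ℝ) ^ (T.depth f) * (1 / w f) ≤ 3 / w f := by
        have : v f = 1 / w f := by
          simp only [hv_def, hqf, sq]
          rw [div_mul_eq_div_div, div_self (ne_of_gt hwf)]
        rw [← this]
        exact le_trans h1 hV3
      have h3 : (2:ℝ) ^ (T.depth f) ≤ 3 := by
        have := mul_le_mul_of_nonneg_right h2 hwf.le
        rw [mul_assoc, one_div, inv_mul_cancel₀ (ne_of_gt hwf), mul_one,
          div_mul_eq_mul_div, mul_div_assoc, div_self (ne_of_gt hwf), mul_one] at this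
        linarith
      have h4 : (2:ℝ) ^ (T.depth f) ≤ 2 ^ 2 := by norm_num; linarith
      have h5 : T.depth f ≤ 2 := (pow_le_pow_iff_right₀ (by norm_num : (1:ℝ) < 2)).mp h4
      exact_mod_cast h5
    -- per-access bound
    have hacc : ∀ j : Fin m, (T.dist f (S j) : ℝ)
        ≤ 2 * Real.logb 2 (q (S j) / min (w f) (w (S j))) + 4 := by
      intro j
      set s := S j with hs_def
      have hs := hS j
      have hs' := Finset.mem_Icc.mp hs
      have hws : 0 < w s := hw s hs
      have hqs : 0 < q s := hqpos s hs
      have hm0 : 0 < min (w f) (w s) := lt_min hwf hws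
      have hqge_f : w f ≤ q s := by
        refine Finset.single_le_sum (fun i hi => ?_) (Finset.mem_Icc.mpr ⟨min_le_left f s, le_max_left f s⟩)
        have := Finset.mem_Icc.mp hi
        exact (hw i (Finset.mem_Icc.mpr ⟨by omega, by omega⟩)).le
      have hqge_s : w s ≤ q s := by
        refine Finset.single_le_sum (fun i hi => ?_) (Finset.mem_Icc.mpr ⟨min_le_right f s, le_max_right f s⟩)
        have := Finset.mem_Icc.mp hi
        exact (hw i (Finset.mem_Icc.mpr ⟨by omega, by omega⟩)).le
      have hr1 : 1 ≤ q s / min (w f) (w s) := by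
        rw [le_div_iff₀ hm0, one_mul]
        exact le_trans (min_le_left _ _) hqge_f
      -- depth bound for s
      have h1 := hTd s hs
      have h2 : (2:ℝ) ^ (T.depth s) * v s ≤ 3 / w f := le_trans h1 hV3
      have hvs : v s = w s / (q s) ^ 2 := rfl
      have h3 : (2:ℝ) ^ (T.depth s) ≤ 4 * (q s / min (w f) (w s)) ^ 2 := by
        rw [hvs] at h2
        have hp : (0:ℝ) < 2 ^ (T.depth s) := by positivity
        rw [div_pow]
        rw [mul_comm, ← le_div_iff₀ hp] at h2
        have h2' : (2:ℝ) ^ (T.depth s) * (w s / q s ^ 2) ≤ 3 / w f := by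
          rw [hvs] at h1; exact le_trans h1 hV3
        -- cross multiply: 2^ds * w s * w f ≤ 3 * q s ^ 2
        have h4 : (2:ℝ) ^ (T.depth s) * w s * w f ≤ 3 * q s ^ 2 := by
          have := mul_le_mul_of_nonneg_right h2' (mul_pos hwf (pow_pos hqs 2)).le
          calc (2:ℝ) ^ (T.depth s) * w s * w f
              = (2:ℝ) ^ (T.depth s) * (w s / q s ^ 2) * (w f * q s ^ 2) := by
                field_simp
            _ ≤ 3 / w f * (w f * q s ^ 2) := this
            _ = 3 * q s ^ 2 := by field_simp
        have hmin2 : min (w f) (w s) ^ 2 ≤ w s * w f := by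
          have h5 : min (w f) (w s) ≤ w f := min_le_left _ _
          have h6 : min (w f) (w s) ≤ w s := min_le_right _ _
          nlinarith
        rw [← mul_div_assoc, le_div_iff₀ (by positivity : (0:ℝ) < min (w f) (w s) ^ 2)]
        nlinarith [mul_le_mul_of_nonneg_left hmin2 hp.le, pow_pos hqs 2]
      have hlog : (T.depth s : ℝ) ≤ 2 + 2 * Real.logb 2 (q s / min (w f) (w s)) := by
        have := nat_le_logb h3
        have heq : Real.logb 2 (4 * (q s / min (w f) (w s)) ^ 2)
            = 2 + 2 * Real.logb 2 (q s / min (w f) (w s)) := by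
          have hrpos : (0:ℝ) < q s / min (w f) (w s) := by positivity
          rw [Real.logb_mul (by norm_num) (by positivity), Real.logb_pow,
            show (4:ℝ) = 2 ^ 2 by norm_num, Real.logb_pow,
            Real.logb_self_eq_one (by norm_num)]
          push_cast; ring
        rw [heq] at this
        exact this
      have hdist : (T.dist f s : ℝ) ≤ (T.depth f : ℝ) + (T.depth s : ℝ) := by
        exact_mod_cast dist_le_depth_aux T f s
      calc (T.dist f s : ℝ) ≤ (T.depth f : ℝ) + (T.depth s : ℝ) := hdist
        _ ≤ 2 + (2 + 2 * Real.logb 2 (q s / min (w f) (w s))) := add_le_add hdf hlog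
        _ = 2 * Real.logb 2 (q s / min (w f) (w s)) + 4 := by ring
    -- each log term is nonnegative
    have hlognn : ∀ j : Fin m, 0 ≤ Real.logb 2 (q (S j) / min (w f) (w (S j))) := by
      intro j
      have hs := hS j
      have hws : 0 < w (S j) := hw _ hs
      have hm0 : 0 < min (w f) (w (S j)) := lt_min hwf hws
      have hqge_f : w f ≤ q (S j) := by
        refine Finset.single_le_sum (fun i hi => ?_)
          (Finset.mem_Icc.mpr ⟨min_le_left f (S j), le_max_left f (S j)⟩)
        have := Finset.mem_Icc.mp hi
        have hs' := Finset.mem_Icc.mp hs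
        exact (hw i (Finset.mem_Icc.mpr ⟨by omega, by omega⟩)).le
      refine Real.logb_nonneg (by norm_num) ?_
      rw [le_div_iff₀ hm0, one_mul]
      exact le_trans (min_le_left _ _) hqge_f
    -- FF is at most the cost of the tree T with finger f
    have hFFle : FF n S ≤ ∑ j, (T.dist f (S j) : ℝ) := by
      apply csInf_le
      · refine ⟨0, ?_⟩
        rintro y ⟨T', f', hf', hT', rfl⟩
        exact Finset.sum_nonneg (fun j _ => Nat.cast_nonneg _)
      · exact ⟨T, f, hf, ⟨hTs, hTk⟩, rfl⟩
    calc FF n S ≤ ∑ j, (T.dist f (S j) : ℝ) := hFFle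
      _ ≤ ∑ j, (2 * Real.logb 2 (q (S j) / min (w f) (w (S j))) + 4) :=
          Finset.sum_le_sum (fun j _ => hacc j)
      _ = 2 * (∑ j, Real.logb 2 (q (S j) / min (w f) (w (S j)))) + 4 * m := by
          rw [Finset.sum_add_distrib, ← Finset.mul_sum]
          simp [Finset.card_univ]
          ring
      _ ≤ 4 * ((∑ j, Real.logb 2 (q (S j) / min (w f) (w (S j)))) + m) := by
          have : 0 ≤ ∑ j, Real.logb 2 (q (S j) / min (w f) (w (S j))) :=
            Finset.sum_nonneg (fun j _ => hlognn j)
          linarith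
  -- the WSF defining set is nonempty
  have hne : {x : ℝ | ∃ w : ℕ → ℝ, ∃ f ∈ Finset.Icc 1 n,
      (∀ i ∈ Finset.Icc 1 n, 0 < w i) ∧
      x = ∑ j, Real.logb 2
        ((∑ i ∈ Finset.Icc (min f (S j)) (max f (S j)), w i) / min (w f) (w (S j)))}.Nonempty := by
    refine ⟨_, (fun _ => 1), 1, Finset.mem_Icc.mpr ⟨le_refl 1, hn⟩, fun i _ => one_pos, rfl⟩
  have h2 : (FF n S - 4 * m) / 4 ≤ WSF n S := by
    rw [WSF]
    refine le_csInf hne (fun x hx => ?_)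
    have := key x hx
    linarith
  linarith
end

section
/- Let S = (s_1,…,s_m) ∈ {1,…,n}^m be an access sequence served by the Move-to-root algorithm from an arbitrary initial BST on {1,…,n}. Then for every j ≤ m and every j′ < j, in the tree obtained after serving s_1,…,s_{j−1}, the set of keys { s_{j′}, s_{j′+1}, …, s_{j−1} } induces a connected subtree that contains the root. -/
namespace BTree

/-- Move-to-root: rotate the key `x` up to the root (identity if `x` is absent). -/
def mtr (x : ℕ) : BTree → BTree
  | leaf => leaf
  | node l a r =>
    if x = a then node l a r
    else if x < a then
      match mtr x l with
      | leaf => node leaf a r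
      | node t1 c t2 => node t1 c (node t2 a r)
    else
      match mtr x r with
      | leaf => node l a leaf
      | node t1 c t2 => node (node l a t1) c t2

/-- The tree obtained by serving a list of accesses with Move-to-root. -/
def mtrAll : BTree → List ℕ → BTree
  | T, [] => T
  | T, x :: xs => mtrAll (mtr x T) xs

/-- The keys on the path from the root to the key `y` (inclusive), via the search path. -/
def pathTo : BTree → ℕ → List ℕ
  | leaf, _ => []
  | node l x r, y =>
      if y = x then [x]
      else if y < x then x :: pathTo l y
      else x :: pathTo r y

/-- The key at the root, if any. -/
def rootKey : BTree → Option ℕ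
  | leaf => none
  | node _ x _ => some x

end BTree

namespace BTree

lemma mem_keys_node {l r : BTree} {a y : ℕ} :
    y ∈ (node l a r).keys ↔ y ∈ l.keys ∨ y = a ∨ y ∈ r.keys := by
  simp [keys, or_assoc]
  tauto

lemma mtr_spec (x : ℕ) : ∀ T : BTree, T.IsSearchTree → x ∈ T.keys →
    ∃ A B, mtr x T = node A x B ∧ (node A x B).keys = T.keys ∧
      (node A x B).IsSearchTree ∧
      (∀ y ∈ T.keys, ∀ z ∈ pathTo (node A x B) y, z = x ∨ z ∈ pathTo T y) := by
  intro T
  induction T with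
  | leaf => intro _ hx; simp [keys] at hx
  | node l a r ihl ihr =>
    intro hst hx
    obtain ⟨hla, hra, hl, hr⟩ := hst
    by_cases hxa : x = a
    · subst hxa
      refine ⟨l, r, by simp [mtr], rfl, ⟨hla, hra, hl, hr⟩, ?_⟩
      intro y _ z hz; exact Or.inr hz
    · by_cases hlt : x < a
      · have hxl : x ∈ l.keys := by
          rcases mem_keys_node.mp hx with h | h | h
          · exact h
          · exact absurd h hxa
          · exact absurd (hra x h) (by omega)
        obtain ⟨A, B, hAB, hkeys, hbst, hpath⟩ := ihl hl hxl
        have hkeq : ∀ y, y ∈ A.keys ∨ y = x ∨ y ∈ B.keys ↔ y ∈ l.keys := by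
          intro y
          have := Finset.ext_iff.mp hkeys y
          simpa [mem_keys_node] using this
        obtain ⟨hA, hB, hsA, hsB⟩ := hbst
        refine ⟨A, node B a r, ?_, ?_, ?_, ?_⟩
        · show mtr x (node l a r) = _
          simp only [mtr, if_neg hxa, if_pos hlt]
          rw [hAB]
        · ext y
          have h := hkeq y
          clear hpath ihl ihr
          simp only [mem_keys_node]
          tauto
        · refine ⟨hA, ?_, hsA, ?_, hra, hsB, hr⟩
          · intro y hy
            rcases mem_keys_node.mp hy with h | h | h
            · exact hB y h
            · omega
            · have := hra y h; omega
          · intro y hy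
            exact hla y ((hkeq y).mp (Or.inr (Or.inr hy)))
        · intro y hy z hz
          by_cases hyx : y = x
          · subst hyx
            simp [pathTo] at hz
            exact Or.inl hz
          by_cases hylt : y < x
          · -- y in keys l
            have hyl : y ∈ l.keys := by
              rcases mem_keys_node.mp hy with h | h | h
              · exact h
              · omega
              · have := hra y h; omega
            have hz' : z ∈ pathTo (node A x B) y := by
              simpa [pathTo, hyx, hylt] using hz
            rcases hpath y hyl z hz' with h | h
            · exact Or.inl h
            · right
              have hya : ¬ y = a := by omega
              simp [pathTo, hya, show y < a by omega, h]
          · -- x < y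
            have hxy : x < y := by omega
            simp only [pathTo, if_neg hyx, if_neg hylt] at hz
            rcases List.mem_cons.mp hz with h | h
            · exact Or.inl h
            · by_cases hya : y = a
              · subst hya
                simp [pathTo] at h ⊢
                exact Or.inr h
              · by_cases hyalt : y < a
                · have hyl : y ∈ l.keys := by
                    rcases mem_keys_node.mp hy with h' | h' | h'
                    · exact h'
                    · omega
                    · have := hra y h'; omega
                  simp only [pathTo, if_neg hya, if_pos hyalt] at h
                  rcases List.mem_cons.mp h with h' | h'
                  · right; simp [pathTo, hya, hyalt, h']
                  · have hz' : z ∈ pathTo (node A x B) y := by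
                      simp [pathTo, hyx, hylt, h']
                    rcases hpath y hyl z hz' with h'' | h''
                    · exact Or.inl h''
                    · right; simp [pathTo, hya, hyalt, h'']
                · right
                  simp only [pathTo, if_neg hya, if_neg hyalt] at h ⊢
                  exact h
      · -- a < x, symmetric
        have hgt : a < x := by omega
        have hxr : x ∈ r.keys := by
          rcases mem_keys_node.mp hx with h | h | h
          · exact absurd (hla x h) (by omega)
          · exact absurd h hxa
          · exact h
        obtain ⟨A, B, hAB, hkeys, hbst, hpath⟩ := ihr hr hxr
        have hkeq : ∀ y, y ∈ A.keys ∨ y = x ∨ y ∈ B.keys ↔ y ∈ r.keys := by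
          intro y
          have := Finset.ext_iff.mp hkeys y
          simpa [mem_keys_node] using this
        obtain ⟨hA, hB, hsA, hsB⟩ := hbst
        refine ⟨node l a A, B, ?_, ?_, ?_, ?_⟩
        · show mtr x (node l a r) = _
          simp only [mtr, if_neg hxa, if_neg hlt]
          rw [hAB]
        · ext y
          have h := hkeq y
          clear hpath ihl ihr
          simp only [mem_keys_node]
          tauto
        · refine ⟨?_, hB, ⟨hla, ?_, hl, hsA⟩, hsB⟩
          · intro y hy
            rcases mem_keys_node.mp hy with h | h | h
            · have := hla y h; omega
            · omega
            · exact hA y h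
          · intro y hy
            exact hra y ((hkeq y).mp (Or.inl hy))
        · intro y hy z hz
          by_cases hyx : y = x
          · subst hyx
            simp [pathTo] at hz
            exact Or.inl hz
          by_cases hygt : x < y
          · have hylt : ¬ y < x := by omega
            have hyr : y ∈ r.keys := by
              rcases mem_keys_node.mp hy with h | h | h
              · have := hla y h; omega
              · omega
              · exact h
            have hz' : z ∈ pathTo (node A x B) y := by
              simpa [pathTo, hyx, hylt] using hz
            rcases hpath y hyr z hz' with h | h
            · exact Or.inl h
            · right
              have hya : ¬ y = a := by omega
              simp [pathTo, hya, show ¬ y < a by omega, h]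
          · -- y < x
            have hxy : y < x := by omega
            simp only [pathTo, if_neg hyx, if_pos hxy] at hz
            rcases List.mem_cons.mp hz with h | h
            · exact Or.inl h
            · by_cases hya : y = a
              · subst hya
                simp [pathTo] at h ⊢
                exact Or.inr h
              · by_cases hyagt : y < a
                · right
                  simp only [pathTo, if_neg hya, if_pos hyagt] at h ⊢
                  exact h
                · have hyr : y ∈ r.keys := by
                    rcases mem_keys_node.mp hy with h' | h' | h'
                    · have := hla y h'; omega
                    · omega
                    · exact h'
                  simp only [pathTo, if_neg hya, if_neg hyagt] at h
                  rcases List.mem_cons.mp h with h' | h'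
                  · right; simp [pathTo, hya, hyagt, h']
                  · have hz' : z ∈ pathTo (node A x B) y := by
                      simp [pathTo, hyx, hxy, h']
                    rcases hpath y hyr z hz' with h'' | h''
                    · exact Or.inl h''
                    · right; simp [pathTo, hya, hyagt, h'']
      
end BTree

namespace BTree

lemma mtrAll_append (T : BTree) (l1 l2 : List ℕ) :
    mtrAll T (l1 ++ l2) = mtrAll (mtrAll T l1) l2 := by
  induction l1 generalizing T with
  | nil => rfl
  | cons x xs ih => simp [mtrAll, ih]

lemma mtrAll_preserve : ∀ (l : List ℕ) (T : BTree), T.IsSearchTree →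
    (∀ a ∈ l, a ∈ T.keys) →
    (mtrAll T l).IsSearchTree ∧ (mtrAll T l).keys = T.keys := by
  intro l
  induction l with
  | nil => intro T h _; exact ⟨h, rfl⟩
  | cons x xs ih =>
    intro T hst hmem
    obtain ⟨A, B, hAB, hkeys, hbst, -⟩ := mtr_spec x T hst (hmem x (List.mem_cons_self))
    have h2 : ∀ a ∈ xs, a ∈ (mtr x T).keys := by
      intro a ha; rw [hAB, hkeys]; exact hmem a (List.mem_cons_of_mem x ha)
    have := ih (mtr x T) (by rw [hAB]; exact hbst) h2
    refine ⟨this.1, ?_⟩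
    rw [show mtrAll T (x :: xs) = mtrAll (mtr x T) xs from rfl, this.2, hAB, hkeys]

lemma mtrAll_good : ∀ (l : List ℕ) (T : BTree) (R : Finset ℕ),
    T.IsSearchTree → (∀ a ∈ l, a ∈ T.keys) → (R ⊆ T.keys) →
    (∀ x, rootKey T = some x → x ∈ R) →
    (∀ y ∈ R, ∀ z ∈ pathTo T y, z ∈ R) →
    (∀ x, rootKey (mtrAll T l) = some x → x ∈ R ∪ l.toFinset) ∧
    (∀ y ∈ R ∪ l.toFinset, ∀ z ∈ pathTo (mtrAll T l) y, z ∈ R ∪ l.toFinset) := by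
  intro l
  induction l with
  | nil =>
    intro T R _ _ _ hroot hpathcl
    simpa [mtrAll] using ⟨hroot, hpathcl⟩
  | cons x xs ih =>
    intro T R hst hmem hsub hroot hpathcl
    obtain ⟨A, B, hAB, hkeys, hbst, hpath⟩ :=
      mtr_spec x T hst (hmem x (List.mem_cons_self))
    have hxT : x ∈ T.keys := hmem x (List.mem_cons_self)
    have h1 : (mtr x T).IsSearchTree := by rw [hAB]; exact hbst
    have h2 : ∀ a ∈ xs, a ∈ (mtr x T).keys := by
      intro a ha; rw [hAB, hkeys]; exact hmem a (List.mem_cons_of_mem x ha)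
    have h3 : insert x R ⊆ (mtr x T).keys := by
      rw [hAB, hkeys]
      intro y hy
      rcases Finset.mem_insert.mp hy with h | h
      · subst h; exact hxT
      · exact hsub h
    have h4 : ∀ y, rootKey (mtr x T) = some y → y ∈ insert x R := by
      intro y hy
      rw [hAB] at hy
      simp only [rootKey, Option.some.injEq] at hy
      subst hy; exact Finset.mem_insert_self x R
    have h5 : ∀ y ∈ insert x R, ∀ z ∈ pathTo (mtr x T) y, z ∈ insert x R := by
      intro y hy z hz
      rw [hAB] at hz
      rcases Finset.mem_insert.mp hy with h | h
      · subst h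
        simp [pathTo] at hz
        simp [hz]
      · rcases hpath y (hsub h) z hz with h' | h'
        · simp [h']
        · exact Finset.mem_insert_of_mem (hpathcl y h z h')
    have := ih (mtr x T) (insert x R) h1 h2 h3 h4 h5
    have hset : insert x R ∪ xs.toFinset = R ∪ (x :: xs).toFinset := by
      simp [List.toFinset_cons, Finset.insert_union, Finset.union_insert]
    rw [show mtrAll T (x :: xs) = mtrAll (mtr x T) xs from rfl]
    rw [← hset]
    exact this

end BTree

/-- When a sequence `S ∈ {1,…,n}^m` is served by Move-to-root, then for all `j ≤ m` and
`1 ≤ j′ < j`, in the tree obtained after serving `s_1, …, s_{j−1}` the key set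
`{s_{j′}, …, s_{j−1}}` induces a connected subtree containing the root (equivalently,
it contains the root and is closed under taking ancestors). -/
theorem mtr_recent_connected (n m : ℕ) (S : Fin m → ℕ)
    (hS : ∀ j, S j ∈ Finset.Icc 1 n) (T : BTree) (hT : T.IsBSTOn n)
    (j : ℕ) (hjm : j ≤ m) (j' : ℕ) (hj'1 : 1 ≤ j') (hj'j : j' < j) :
    (∀ x, BTree.rootKey (BTree.mtrAll T ((List.ofFn S).take (j - 1))) = some x →
      x ∈ Finset.image S
        (Finset.univ.filter fun i : Fin m => j' ≤ (i : ℕ) + 1 ∧ (i : ℕ) + 1 ≤ j - 1)) ∧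
    (∀ y ∈ Finset.image S
        (Finset.univ.filter fun i : Fin m => j' ≤ (i : ℕ) + 1 ∧ (i : ℕ) + 1 ≤ j - 1),
      ∀ z ∈ BTree.pathTo (BTree.mtrAll T ((List.ofFn S).take (j - 1))) y,
        z ∈ Finset.image S
          (Finset.univ.filter fun i : Fin m => j' ≤ (i : ℕ) + 1 ∧ (i : ℕ) + 1 ≤ j - 1)) := by
  obtain ⟨hTst, hTkeys⟩ := hT
  set L := List.ofFn S with hL
  set t := j - 1 with ht
  set d := j' - 1 with hd
  have hdt : d < t := by omega
  have htm : t ≤ m := by omega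
  have hLlen : L.length = m := by simp [hL]
  have hmemL : ∀ a ∈ L, a ∈ Finset.Icc 1 n := by
    intro a ha
    rw [hL, List.mem_ofFn] at ha
    obtain ⟨i, hi⟩ := ha
    rw [← hi]; exact hS i
  set l := (L.take t).drop d with hl
  have hsplit : L.take t = L.take d ++ l := by
    rw [hl]
    conv_lhs => rw [← List.take_append_drop d (L.take t)]
    rw [List.take_take, min_eq_left (by omega)]
  have hllen : l.length = t - d := by
    rw [hl, List.length_drop, List.length_take, hLlen, min_eq_left htm]
  -- intermediate tree
  set T' := BTree.mtrAll T (L.take d) with hT'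
  have hT'pre : T'.IsSearchTree ∧ T'.keys = T.keys := by
    apply BTree.mtrAll_preserve
    · exact hTst
    · intro a ha; rw [hTkeys]; exact hmemL a (List.mem_of_mem_take ha)
  have hrw : BTree.mtrAll T (L.take t) = BTree.mtrAll T' l := by
    rw [hsplit, BTree.mtrAll_append]
  have hlne : l ≠ [] := by
    intro h; rw [h] at hllen; simp at hllen; omega
  obtain ⟨x, xs, hxxs⟩ := List.exists_cons_of_ne_nil hlne
  have hlsub : ∀ a ∈ l, a ∈ T'.keys := by
    intro a ha
    rw [hT'pre.2, hTkeys]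
    exact hmemL a (List.mem_of_mem_take (List.mem_of_mem_drop ha))
  have hxT' : x ∈ T'.keys := hlsub x (by rw [hxxs]; exact List.mem_cons_self)
  obtain ⟨A, B, hAB, hkeys, hbst, hpath⟩ := BTree.mtr_spec x T' hT'pre.1 hxT'
  have hgood := BTree.mtrAll_good xs (BTree.mtr x T') {x}
    (by rw [hAB]; exact hbst)
    (by intro a ha; rw [hAB, hkeys]; exact hlsub a (by rw [hxxs]; exact List.mem_cons_of_mem x ha))
    (by intro y hy; rw [Finset.mem_singleton] at hy; subst hy; rw [hAB, hkeys]; exact hxT')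
    (by intro y hy; rw [hAB] at hy; simp only [BTree.rootKey, Option.some.injEq] at hy
        simp [hy])
    (by intro y hy z hz
        rw [Finset.mem_singleton] at hy; subst hy
        rw [hAB] at hz
        simp [BTree.pathTo] at hz
        simp [hz])
  -- identify the finset
  have hF : Finset.image S
      (Finset.univ.filter fun i : Fin m => j' ≤ (i : ℕ) + 1 ∧ (i : ℕ) + 1 ≤ j - 1)
      = {x} ∪ xs.toFinset := by
    have hlF : ({x} : Finset ℕ) ∪ xs.toFinset = l.toFinset := by
      rw [hxxs, List.toFinset_cons, Finset.insert_eq]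
    rw [hlF]
    ext z
    simp only [Finset.mem_image, Finset.mem_filter, Finset.mem_univ, true_and,
      List.mem_toFinset]
    constructor
    · rintro ⟨i, ⟨hi1, hi2⟩, hiz⟩
      rw [hl, List.mem_iff_getElem]
      refine ⟨(i : ℕ) - d, ?_, ?_⟩
      · rw [List.length_drop, List.length_take, hLlen, min_eq_left htm]; omega
      · simp only [List.getElem_drop, List.getElem_take, hL, List.getElem_ofFn]
        simp only [show d + ((i : ℕ) - d) = (i : ℕ) from by omega]
        simpa using hiz
    · intro hz
      rw [hl, List.mem_iff_getElem] at hz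
      obtain ⟨k, hk, hkz⟩ := hz
      rw [List.length_drop, List.length_take, hLlen, min_eq_left htm] at hk
      simp only [List.getElem_drop, List.getElem_take, hL, List.getElem_ofFn] at hkz
      refine ⟨⟨d + k, by omega⟩, ⟨by simp; omega, by simp; omega⟩, ?_⟩
      simpa using hkz
  rw [hF, hrw, hxxs]
  rw [show BTree.mtrAll T' (x :: xs) = BTree.mtrAll (BTree.mtr x T') xs from rfl]
  exact hgood
end
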